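/- Let k be a number field that contains no CM subfield, and let p be a rational prime. Then E_p(k) = {1, -1}. -/

import Mathlib

open NumberField IsDedekindDomain IntermediateField

noncomputable section

/-- Membership in `E_p(k)`: `x ≠ 0`, `ord_v x = 0` (i.e. `v`-adic valuation `1`) for every
finite place `v` not dividing `p`, and `|σ x| = 1` for every complex embedding `σ`. -/
def IsEp (k : Type*) [Field k] [NumberField k] (p : ℕ) (x : k) : Prop :=
  x ≠ 0 ∧
  (∀ v : HeightOneSpectrum (𝓞 k), (p : 𝓞 k) ∉ v.asIdeal → v.valuation k x = 1) ∧
  (∀ σ : k →+* ℂ, ‖σ x‖ = 1)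

open Classical in
/-- `ord_v(x) ∈ ℤ`, the `v`-adic order of `x ∈ k`. -/
def ordAt {k : Type*} [Field k] [NumberField k] (v : HeightOneSpectrum (𝓞 k)) (x : k) : ℤ :=
  if h : x = 0 then 0
  else - Multiplicative.toAdd (WithZero.unzero (((v.valuation k).ne_zero_iff).mpr h))

/-- The image of a prime `v` of `k` under a field automorphism `σ` of `k`. -/
def primeMap {k : Type*} [Field k] [NumberField k] (σ : k ≃ₐ[ℚ] k)
    (v : HeightOneSpectrum (𝓞 k)) : HeightOneSpectrum (𝓞 k) where
  asIdeal := Ideal.comap (RingOfIntegers.mapRingEquiv σ.toRingEquiv).symm.toRingHom v.asIdeal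
  isPrime := v.isPrime.comap _
  ne_bot := fun h => v.ne_bot (by
    have h2 := Ideal.map_comap_of_surjective
      (RingOfIntegers.mapRingEquiv σ.toRingEquiv).symm.toRingHom
      (RingOfIntegers.mapRingEquiv σ.toRingEquiv).symm.surjective v.asIdeal
    rw [h, Ideal.map_bot] at h2
    exact h2.symm)

open Classical in
/-- The inertia degree `f(v|p)` of a prime `v` of `k` over the rational prime `p`. -/
def fdeg {k : Type*} [Field k] [NumberField k] (p : ℕ) (v : HeightOneSpectrum (𝓞 k)) : ℕ :=
  if hPp : Ideal.comap (algebraMap ℤ (𝓞 k)) v.asIdeal = Ideal.span {(p : ℤ)} then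
    @Module.finrank (ℤ ⧸ Ideal.span {(p : ℤ)}) (𝓞 k ⧸ v.asIdeal) _ _ <|
      @Algebra.toModule _ _ _ _ <| RingHom.toAlgebra <|
        Ideal.Quotient.lift (Ideal.span {(p : ℤ)})
          ((Ideal.Quotient.mk v.asIdeal).comp (algebraMap ℤ (𝓞 k))) fun _ ha =>
            Ideal.Quotient.eq_zero_iff_mem.mpr <| Ideal.mem_comap.mp <| hPp.symm ▸ ha
  else 0

/-- A totally real field: every complex embedding has real image. -/
def IsTotallyRealField (F : Type*) [Field F] : Prop :=
  ∀ (σ : F →+* ℂ) (x : F), (σ x).im = 0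

/-- A CM field: a totally imaginary quadratic extension of a totally real field. -/
def IsCMField (F : Type*) [Field F] : Prop :=
  (∀ σ : F →+* ℂ, ∃ x : F, (σ x).im ≠ 0) ∧
  ∃ F₀ : Subfield F, IsTotallyRealField F₀ ∧ Module.finrank F₀ F = 2

/-!
If `x ∈ E_p(k)` is not `±1`, every conjugate of `x` lies on the unit circle without being real,
so `ℚ(x)` is totally imaginary, while `x + x⁻¹ = x + x̄` has only real conjugates, so
`ℚ(x + x⁻¹)` is totally real. As `x` is a root of `T² - (x + x⁻¹) T + 1` outside `ℚ(x + x⁻¹)`,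
`ℚ(x)` is a quadratic extension of it: a CM subfield of `k`.
-/

namespace Complex

lemma im_ne_zero_of_norm_eq_one {z : ℂ} (hz : ‖z‖ = 1) (h₁ : z ≠ 1) (h₂ : z ≠ -1) :
    z.im ≠ 0 := by
  intro him
  have hre : |z.re| = 1 := by
    rwa [abs_re_eq_norm.2 him]
  rcases abs_eq zero_le_one |>.mp hre with h | h
  · exact h₁ (Complex.ext (by simp [h]) (by simp [him]))
  · exact h₂ (Complex.ext (by simp [h]) (by simp [him]))

lemma im_add_inv_eq_zero_of_norm_eq_one {z : ℂ} (hz : ‖z‖ = 1) : (z + z⁻¹).im = 0 := by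
  rw [inv_eq_conj hz, add_conj]
  exact ofReal_im _

end Complex

namespace Subfield

variable {K : Type*} [Field K]

theorem closure_closure_coe_preimage {s : Set K} :
    closure (((↑) : closure s → K) ⁻¹' s) = ⊤ :=
  eq_top_iff.2 fun x _ ↦ Subtype.recOn x fun _ hx' ↦
    closure_induction (fun _ h ↦ subset_closure h) (one_mem _) (fun _ _ _ _ ↦ add_mem)
      (fun _ _ ↦ neg_mem) (fun _ _ ↦ inv_mem) (fun _ _ _ _ ↦ mul_mem) hx'

theorem exists_ringHom_extend {Ω : Type*} [Field Ω] [IsAlgClosed Ω] (F : Subfield K)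
    [Algebra.IsAlgebraic F K] (τ : F →+* Ω) : ∃ σ : K →+* Ω, ∀ y : F, σ y = τ y := by
  let := τ.toAlgebra
  exact ⟨(IsAlgClosed.lift : K →ₐ[F] Ω).toRingHom, (IsAlgClosed.lift : K →ₐ[F] Ω).commutes⟩

theorem im_eq_zero_of_mem_closure_singleton {σ : K →+* ℂ} {a y : K} (ha : (σ a).im = 0)
    (hy : y ∈ closure {a}) : (σ y).im = 0 := by
  have hle : closure {a} ≤ Complex.ofRealHom.fieldRange.comap σ :=
    closure_le.2 <| Set.singleton_subset_iff.2 ⟨(σ a).re, Complex.ext rfl ha.symm⟩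
  obtain ⟨r, hr⟩ := hle hy
  rw [← hr]
  exact Complex.ofReal_im r

end Subfield

open Polynomial in
theorem finrank_eq_two_of_add_inv_mem {L : Type*} [Field L] {F₀ : Subfield L} {x : L}
    (hx : x ∉ F₀) (hsum : x + x⁻¹ ∈ F₀) (hgen : Subfield.closure {x} = ⊤) :
    Module.finrank F₀ L = 2 := by
  have hx₀ : x ≠ 0 := fun h => hx (h ▸ F₀.zero_mem)
  let a : F₀ := ⟨x + x⁻¹, hsum⟩
  have hq : (X ^ 2 - C a * X + 1 : F₀[X]).Monic := by monicity!
  have hqdeg : (X ^ 2 - C a * X + 1 : F₀[X]).natDegree = 2 := by compute_degree!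
  have hqx : aeval x (X ^ 2 - C a * X + 1 : F₀[X]) = 0 := by
    simp only [map_add, map_sub, map_mul, map_pow, aeval_X, aeval_C, map_one]
    change x ^ 2 - (x + x⁻¹) * x + 1 = 0
    field_simp
    ring
  have hint : IsIntegral F₀ x := ⟨_, hq, hqx⟩
  have hmin : (minpoly F₀ x).natDegree = 2 := by
    refine le_antisymm ?_ ((minpoly.two_le_natDegree_iff hint).2 ?_)
    · exact hqdeg ▸ natDegree_le_of_dvd (minpoly.dvd _ _ hqx) hq.ne_zero
    · rintro ⟨y, rfl⟩
      exact hx y.2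
  have htop : F₀⟮x⟯ = ⊤ := by
    refine eq_top_iff.2 fun z _ => ?_
    have hle : Subfield.closure {x} ≤ F₀⟮x⟯.toSubfield :=
      Subfield.closure_le.2 (Set.singleton_subset_iff.2 (mem_adjoin_simple_self F₀ x))
    exact hle (hgen ▸ Subfield.mem_top z)
  rw [← finrank_top', ← htop, adjoin.finrank hint, hmin]

theorem isCMField_of_norm_eq_one {L : Type*} [Field L] [Nonempty (L →+* ℂ)] {x : L}
    (hgen : Subfield.closure {x} = ⊤) (hnorm : ∀ σ : L →+* ℂ, ‖σ x‖ = 1) (h₁ : x ≠ 1)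
    (h₂ : x ≠ -1) : _root_.IsCMField L := by
  have him : ∀ σ : L →+* ℂ, (σ x).im ≠ 0 := fun σ =>
    Complex.im_ne_zero_of_norm_eq_one (hnorm σ) (by simpa using σ.injective.ne h₁)
      (by simpa using σ.injective.ne h₂)
  have hsum : ∀ σ : L →+* ℂ, (σ (x + x⁻¹)).im = 0 := fun σ => by
    simpa using Complex.im_add_inv_eq_zero_of_norm_eq_one (hnorm σ)
  let F₀ := Subfield.closure {x + x⁻¹}
  have hx : x ∉ F₀ := fun h =>
    let σ : L →+* ℂ := Classical.arbitrary _
    him σ (Subfield.im_eq_zero_of_mem_closure_singleton (hsum σ) h)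
  have hrank : Module.finrank F₀ L = 2 :=
    finrank_eq_two_of_add_inv_mem hx (Subfield.subset_closure rfl) hgen
  have : FiniteDimensional F₀ L := Module.finite_of_finrank_eq_succ hrank
  refine ⟨fun σ => ⟨x, him σ⟩, F₀, fun τ y => ?_, hrank⟩
  obtain ⟨σ, hσ⟩ := F₀.exists_ringHom_extend τ
  rw [← hσ]
  exact Subfield.im_eq_zero_of_mem_closure_singleton (hsum σ) y.2

theorem isCMField_closure_of_norm_eq_one {k : Type*} [Field k] [NumberField k] {x : k}
    (hnorm : ∀ σ : k →+* ℂ, ‖σ x‖ = 1) (h₁ : x ≠ 1) (h₂ : x ≠ -1) :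
    _root_.IsCMField (Subfield.closure {x}) := by
  let F := Subfield.closure {x}
  let y : F := ⟨x, Subfield.subset_closure rfl⟩
  have hgen : Subfield.closure {y} = ⊤ := by
    have : ((↑) : F → k) ⁻¹' {x} = {y} := by ext; simp [y, Subtype.ext_iff]
    rw [← this, Subfield.closure_closure_coe_preimage]
  have : Nonempty (F →+* ℂ) := ⟨(Classical.arbitrary (k →+* ℂ)).comp F.subtype⟩
  refine isCMField_of_norm_eq_one hgen (fun τ => ?_) (fun h => h₁ congr(Subtype.val $h))
    (fun h => h₂ congr(Subtype.val $h))
  obtain ⟨σ, hσ⟩ := F.exists_ringHom_extend τ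
  rw [← hσ]
  exact hnorm σ

theorem statement2_general (k : Type*) [Field k] [NumberField k] (p : ℕ)
    (hnoCM : ∀ F : Subfield k, ¬ _root_.IsCMField ↥F) (x : k) :
    IsEp k p x ↔ (x = 1 ∨ x = -1) := by
  constructor
  · rintro ⟨-, -, hnorm⟩
    by_contra! h
    exact hnoCM _ (isCMField_closure_of_norm_eq_one hnorm h.1 h.2)
  · rintro (rfl | rfl)
    · exact ⟨one_ne_zero, fun v _ => map_one _, fun σ => by simp⟩
    · exact ⟨by norm_num, fun v _ => by rw [Valuation.map_neg, map_one], fun σ => by simp⟩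

/-- If the number field `k` contains no CM subfield, then
`E_p(k) = {1, -1}`. -/
theorem statement2 (k : Type*) [Field k] [NumberField k] (p : ℕ) (hp : p.Prime)
    (hnoCM : ∀ F : Subfield k, ¬ _root_.IsCMField ↥F) (x : k) :
    IsEp k p x ↔ (x = 1 ∨ x = -1) :=
  statement2_general k p hnoCM x

end
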